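/- arXiv:2601.02198 — 7 statements merged into one kernel-verified Lean document; each statement's English description precedes it below -/
import Mathlib

section
/- Let a < b be real numbers and let f : ℝ → ℝ be monotonically decreasing (antitone) and interval-integrable on [0, b−a]. Define the transfer potential K̄(x) = ∫_a^b f(|x−y|) dy for x ∈ [a,b]. Then K̄ is maximized at the midpoint: for every x ∈ [a,b], K̄(x) ≤ K̄((a+b)/2). -/
/-!
Substituting `t = |x - y|` on either side of `x` turns `K̄ x` into `F (x - a) + F (b - x)`, where
`F s = ∫ t in 0..s, f t`. Since `f` is antitone, `F s + F t ≤ 2 F ((s + t) / 2)`: translating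
`[(s + t) / 2, t]` back onto `[s, (s + t) / 2]` can only increase the integral of `f`. As
`(x - a) + (b - x) = b - a`, the sum is largest when both arguments equal `(b - a) / 2`, that is,
at the midpoint.
-/

open MeasureTheory Set intervalIntegral

theorem integral_comp_abs_sub_of_mem_Icc {f : ℝ → ℝ} {a b x : ℝ} (hx : x ∈ Icc a b)
    (hleft : IntervalIntegrable f volume 0 (x - a))
    (hright : IntervalIntegrable f volume 0 (b - x)) :
    ∫ y in a..b, f |x - y| = (∫ t in 0..x - a, f t) + ∫ t in 0..b - x, f t := by
  obtain ⟨hax, hxb⟩ := hx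
  have eq_left : EqOn (fun y => f |x - y|) (fun y => f (x - y)) (uIcc a x) := fun y hy => by
    rw [uIcc_of_le hax] at hy
    simp only [abs_of_nonneg (sub_nonneg.2 hy.2)]
  have eq_right : EqOn (fun y => f |x - y|) (fun y => f (y - x)) (uIcc x b) := fun y hy => by
    rw [uIcc_of_le hxb] at hy
    simp only [abs_sub_comm x y, abs_of_nonneg (sub_nonneg.2 hy.1)]
  have int_left : IntervalIntegrable (fun y => f |x - y|) volume a x := by
    have := hleft.comp_sub_left x
    rw [sub_zero, sub_sub_cancel] at this
    exact (intervalIntegrable_congr (eq_left.mono uIoc_subset_uIcc)).2 this.symm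
  have int_right : IntervalIntegrable (fun y => f |x - y|) volume x b := by
    have := hright.comp_sub_right x
    rw [zero_add, sub_add_cancel] at this
    exact (intervalIntegrable_congr (eq_right.mono uIoc_subset_uIcc)).2 this
  rw [← integral_add_adjacent_intervals int_left int_right, integral_congr eq_left,
    integral_congr eq_right, integral_comp_sub_left, integral_comp_sub_right, sub_self]

theorem Antitone.integral_comp_add_right_le {f : ℝ → ℝ} (hf : Antitone f) {s t h : ℝ}
    (hst : s ≤ t) (hh : 0 ≤ h) : ∫ u in s..t, f (u + h) ≤ ∫ u in s..t, f u :=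
  integral_mono_on hst (hf.comp_monotone (monotone_id.add_const h)).intervalIntegrable
    hf.intervalIntegrable fun _ _ => hf (le_add_of_nonneg_right hh)

theorem Antitone.integral_add_integral_le_two_mul_integral_midpoint {f : ℝ → ℝ}
    (hf : Antitone f) (c s t : ℝ) :
    (∫ u in c..s, f u) + ∫ u in c..t, f u ≤ 2 * ∫ u in c..(s + t) / 2, f u := by
  wlog hst : s ≤ t generalizing s t
  · rw [add_comm, add_comm s t]
    exact this t s (le_of_not_ge hst)
  set m := (s + t) / 2 with hm
  have shift : ∫ u in m..t, f u = ∫ u in s..m, f (u + (m - s)) := by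
    rw [integral_comp_add_right]
    congr 1 <;> ring
  have split_t : ∫ u in c..t, f u = (∫ u in c..m, f u) + ∫ u in m..t, f u :=
    (integral_add_adjacent_intervals hf.intervalIntegrable hf.intervalIntegrable).symm
  have split_m : ∫ u in c..m, f u = (∫ u in c..s, f u) + ∫ u in s..m, f u :=
    (integral_add_adjacent_intervals hf.intervalIntegrable hf.intervalIntegrable).symm
  have tail_le : ∫ u in m..t, f u ≤ ∫ u in s..m, f u := by
    rw [shift]
    exact hf.integral_comp_add_right_le (by linarith) (by linarith)
  linarith

theorem transfer_potential_max_at_midpoint_general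
    (a b : ℝ) (f : ℝ → ℝ) (hf : Antitone f) :
    ∀ x ∈ Set.Icc a b,
      (∫ y in a..b, f |x - y|) ≤ ∫ y in a..b, f |(a + b) / 2 - y| := by
  intro x hx
  have hmid : (a + b) / 2 ∈ Icc a b := ⟨by linarith [hx.1, hx.2], by linarith [hx.1, hx.2]⟩
  rw [integral_comp_abs_sub_of_mem_Icc hx hf.intervalIntegrable hf.intervalIntegrable,
    integral_comp_abs_sub_of_mem_Icc hmid hf.intervalIntegrable hf.intervalIntegrable]
  have concave := hf.integral_add_integral_le_two_mul_integral_midpoint 0 (x - a) (b - x)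
  have half_left : (a + b) / 2 - a = (x - a + (b - x)) / 2 := by ring
  have half_right : b - (a + b) / 2 = (x - a + (b - x)) / 2 := by ring
  rw [half_left, half_right]
  linarith

/-- **Magnification prototypes (maximum at midpoint).**
For `a < b` and `f` monotonically decreasing (antitone) and interval-integrable on
`[0, b - a]`, the transfer potential `K̄ x = ∫ y in a..b, f |x - y|` is maximized at the
midpoint: for every `x ∈ [a, b]`, `K̄ x ≤ K̄ ((a + b) / 2)`. -/
theorem transfer_potential_max_at_midpoint
    (a b : ℝ) (hab : a < b) (f : ℝ → ℝ) (hf : Antitone f)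
    (hint : IntervalIntegrable f volume 0 (b - a)) :
    ∀ x ∈ Set.Icc a b,
      (∫ y in a..b, f |x - y|) ≤ ∫ y in a..b, f |(a + b) / 2 - y| :=
  transfer_potential_max_at_midpoint_general a b f hf
end

section
/- Let a < b be real numbers and let f : ℝ → ℝ be monotonically decreasing (antitone) and interval-integrable on [0, b−a]. Define the transfer potential K̄(x) = ∫_a^b f(|x−y|) dy for x ∈ [a,b]. Then the two boundary values coincide, K̄(a) = K̄(b), and K̄ is minimized at the boundary: for every x ∈ [a,b], K̄(a) ≤ K̄(x). -/
open MeasureTheory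

/-- **Magnification prototypes (minimum at the boundary).**
For `a < b` and `f` monotonically decreasing (antitone) and interval-integrable on
`[0, b - a]`, the transfer potential `K̄ x = ∫ y in a..b, f |x - y|` takes equal values at the
two boundary points, `K̄ a = K̄ b`, and is minimized there: `K̄ a ≤ K̄ x` for every
`x ∈ [a, b]`. -/
theorem transfer_potential_min_at_boundary
    (a b : ℝ) (hab : a < b) (f : ℝ → ℝ) (hf : Antitone f)
    (hint : IntervalIntegrable f volume 0 (b - a)) :
    (∫ y in a..b, f |a - y|) = (∫ y in a..b, f |b - y|) ∧
    ∀ x ∈ Set.Icc a b,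
      (∫ y in a..b, f |a - y|) ≤ ∫ y in a..b, f |x - y| := by
  -- key identity : for x ∈ [a,b], K̄ x = ∫_0^{x-a} f + ∫_0^{b-x} f
  have key : ∀ x ∈ Set.Icc a b,
      (∫ y in a..b, f |x - y|) =
        (∫ t in (0:ℝ)..(x - a), f t) + ∫ t in (0:ℝ)..(b - x), f t := by
    intro x hx
    obtain ⟨hax, hxb⟩ := hx
    have hi1 : IntervalIntegrable (fun y => f |x - y|) volume a x := by
      apply MonotoneOn.intervalIntegrable
      intro y1 hy1 y2 hy2 h12
      rw [Set.uIcc_of_le hax] at hy1 hy2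
      have e1 : |x - y1| = x - y1 := abs_of_nonneg (by linarith [hy1.2])
      have e2 : |x - y2| = x - y2 := abs_of_nonneg (by linarith [hy2.2])
      show f |x - y1| ≤ f |x - y2|
      rw [e1, e2]
      exact hf (by linarith)
    have hi2 : IntervalIntegrable (fun y => f |x - y|) volume x b := by
      apply AntitoneOn.intervalIntegrable
      intro y1 hy1 y2 hy2 h12
      rw [Set.uIcc_of_le hxb] at hy1 hy2
      have e1 : |x - y1| = y1 - x := abs_sub_comm x y1 ▸ abs_of_nonneg (by linarith [hy1.1])
      have e2 : |x - y2| = y2 - x := abs_sub_comm x y2 ▸ abs_of_nonneg (by linarith [hy2.1])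
      show f |x - y2| ≤ f |x - y1|
      rw [e1, e2]
      exact hf (by linarith)
    rw [← intervalIntegral.integral_add_adjacent_intervals hi1 hi2]
    congr 1
    · have h1 : (∫ y in a..x, f |x - y|) = ∫ y in a..x, f (x - y) := by
        apply intervalIntegral.integral_congr
        intro y hy
        rw [Set.uIcc_of_le hax] at hy
        show f |x - y| = f (x - y)
        rw [abs_of_nonneg (by linarith [hy.2])]
      rw [h1, intervalIntegral.integral_comp_sub_left f x, sub_self]
    · have h2 : (∫ y in x..b, f |x - y|) = ∫ y in x..b, f (y - x) := by
        apply intervalIntegral.integral_congr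
        intro y hy
        rw [Set.uIcc_of_le hxb] at hy
        show f |x - y| = f (y - x)
        rw [abs_sub_comm, abs_of_nonneg (by linarith [hy.1])]
      rw [h2, intervalIntegral.integral_comp_sub_right f x, sub_self]
  have ha : (∫ y in a..b, f |a - y|) = ∫ t in (0:ℝ)..(b - a), f t := by
    rw [key a ⟨le_refl a, hab.le⟩, sub_self, intervalIntegral.integral_same, zero_add]
  have hb : (∫ y in a..b, f |b - y|) = ∫ t in (0:ℝ)..(b - a), f t := by
    rw [key b ⟨hab.le, le_refl b⟩, sub_self, intervalIntegral.integral_same, add_zero]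
  refine ⟨ha.trans hb.symm, ?_⟩
  intro x hx
  obtain ⟨hax, hxb⟩ := hx
  rw [ha, key x ⟨hax, hxb⟩]
  have hsplit : (∫ t in (0:ℝ)..(b - a), f t) =
      (∫ t in (0:ℝ)..(x - a), f t) + ∫ t in (x - a)..(b - a), f t :=
    (intervalIntegral.integral_add_adjacent_intervals
      hf.intervalIntegrable hf.intervalIntegrable).symm
  rw [hsplit]
  gcongr
  have hc : (∫ t in (x - a)..(b - a), f t) = ∫ t in (0:ℝ)..(b - x), f (t + (x - a)) := by
    rw [intervalIntegral.integral_comp_add_right f (x - a), zero_add]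
    ring_nf
  rw [hc]
  apply intervalIntegral.integral_mono_on (by linarith)
  · exact (hf.comp_monotone (monotone_id.add_const (x - a))).intervalIntegrable
  · exact hf.intervalIntegrable
  · intro t ht
    exact hf (by linarith)
end

section
/- Let a < b be real numbers and let f : ℝ → ℝ be strictly decreasing and interval-integrable on [0, b−a]. Define the transfer potential K̄(x) = ∫_a^b f(|x−y|) dy for x ∈ [a,b]. Then K̄ is strictly increasing on [a, (a+b)/2] and strictly decreasing on [(a+b)/2, b]. -/
open MeasureTheory

/-!
Substituting `t = x - y` gives `K̄ x = ∫ t in x - b..x - a, f |t|`, so moving `x` from `x₁` up to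
`x₂` exchanges the window `[x₁ - b, x₂ - b]` for its translate by `b - a`, namely
`[x₁ - a, x₂ - a]`. Since `|t| < |t - (b - a)|` exactly when `t < (b - a) / 2`, the gained values
of `f |·|` beat the lost ones pointwise as long as `x₂ ≤ (a + b) / 2`. The reflection
`y ↦ a + b - y` makes `K̄` symmetric about the midpoint, which gives the decreasing half. No
integrability assumption is needed: a monotone function is interval integrable.
-/

open Set intervalIntegral

noncomputable def transferPotential (f : ℝ → ℝ) (a b x : ℝ) : ℝ := ∫ y in a..b, f |x - y|

theorem Antitone.intervalIntegrable_comp_abs_sub {f : ℝ → ℝ} (hf : Antitone f) (c : ℝ)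
    {μ : Measure ℝ} [IsLocallyFiniteMeasure μ] {p q : ℝ} :
    IntervalIntegrable (fun t => f |t - c|) μ p q := by
  have hmin : (fun t => f |t - c|) = (fun t => f (t - c)) ⊓ fun t => f (c - t) := by
    ext t
    rw [abs_eq_max_neg, neg_sub]
    exact hf.map_max
  have hleft : IntervalIntegrable (fun t => f (t - c)) μ p q :=
    (hf.comp_monotone fun _ _ h => sub_le_sub_right h c).intervalIntegrable
  have hright : IntervalIntegrable (fun t => f (c - t)) μ p q :=
    (hf.comp fun _ _ h => sub_le_sub_left h c).intervalIntegrable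
  rw [hmin]
  exact ⟨hleft.1.inf hright.1, hleft.2.inf hright.2⟩

theorem transferPotential_eq_integral_comp_abs (f : ℝ → ℝ) (a b x : ℝ) :
    transferPotential f a b x = ∫ t in (x - b)..(x - a), f |t| :=
  integral_comp_sub_left (fun t => f |t|) x

theorem transferPotential_reflect (f : ℝ → ℝ) (a b x : ℝ) :
    transferPotential f a b (a + b - x) = transferPotential f a b x := by
  have hsubst := integral_comp_sub_left (fun y => f |x - y|) (a + b) (a := a) (b := b)
  rw [add_sub_cancel_right, add_sub_cancel_left] at hsubst
  rw [transferPotential, transferPotential, ← hsubst]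
  congr 1
  ext y
  rw [abs_sub_comm]
  ring_nf

theorem Antitone.transferPotential_sub {f : ℝ → ℝ} (hf : Antitone f) (a b x₁ x₂ : ℝ) :
    transferPotential f a b x₂ - transferPotential f a b x₁ =
      ∫ t in (x₁ - a)..(x₂ - a), (f |t| - f |t - (b - a)|) := by
  have hg (p q : ℝ) : IntervalIntegrable (fun t => f |t|) volume p q := by
    simpa using hf.intervalIntegrable_comp_abs_sub 0 (p := p) (q := q)
  have hshift : ∫ t in (x₁ - b)..(x₂ - b), f |t| =
      ∫ t in (x₁ - a)..(x₂ - a), f |t - (b - a)| := by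
    rw [integral_comp_sub_right (fun t => f |t|)]
    ring_nf
  rw [transferPotential_eq_integral_comp_abs, transferPotential_eq_integral_comp_abs,
    integral_interval_sub_interval_comm' (hg _ _) (hg _ _) (hg _ _), hshift, integral_sub (hg _ _)]
  exact hf.intervalIntegrable_comp_abs_sub (b - a)

theorem StrictAnti.transferPotential_strictMonoOn {f : ℝ → ℝ} (hf : StrictAnti f) {a b : ℝ}
    (hab : a < b) : StrictMonoOn (transferPotential f a b) (Iic ((a + b) / 2)) := by
  intro x₁ _ x₂ hx₂ hx
  rw [← sub_pos, hf.antitone.transferPotential_sub]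
  refine intervalIntegral_pos_of_pos_on ?_ (fun t ht => sub_pos.2 (hf ?_)) (by linarith)
  · simpa using (hf.antitone.intervalIntegrable_comp_abs_sub 0).sub
      (hf.antitone.intervalIntegrable_comp_abs_sub (b - a))
  · have ht' : t < (b - a) / 2 := by rw [mem_Iic] at hx₂; linarith [ht.2]
    rw [abs_of_neg (by linarith : t - (b - a) < 0)]
    exact abs_lt.2 ⟨by linarith, by linarith⟩

theorem StrictAnti.transferPotential_strictAntiOn {f : ℝ → ℝ} (hf : StrictAnti f) {a b : ℝ}
    (hab : a < b) : StrictAntiOn (transferPotential f a b) (Ici ((a + b) / 2)) := by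
  intro x₁ hx₁ x₂ _ hx
  rw [mem_Ici] at hx₁
  rw [← transferPotential_reflect f a b x₁, ← transferPotential_reflect f a b x₂]
  exact hf.transferPotential_strictMonoOn hab (mem_Iic.2 (by linarith)) (mem_Iic.2 (by linarith))
    (by linarith)

theorem transfer_potential_strict_mono_anti_general
    (a b : ℝ) (hab : a < b) (f : ℝ → ℝ) (hf : StrictAnti f) :
    StrictMonoOn (fun x : ℝ => ∫ y in a..b, f |x - y|) (Set.Icc a ((a + b) / 2)) ∧
    StrictAntiOn (fun x : ℝ => ∫ y in a..b, f |x - y|) (Set.Icc ((a + b) / 2) b) :=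
  ⟨(hf.transferPotential_strictMonoOn hab).mono Icc_subset_Iic_self,
    (hf.transferPotential_strictAntiOn hab).mono Icc_subset_Ici_self⟩

/-- **Strict monotonicity of the transfer potential.**
For `a < b` and `f` strictly decreasing and interval-integrable on `[0, b - a]`, the transfer
potential `K̄ x = ∫ y in a..b, f |x - y|` is strictly increasing on `[a, (a + b) / 2]` and
strictly decreasing on `[(a + b) / 2, b]`. -/
theorem transfer_potential_strict_mono_anti
    (a b : ℝ) (hab : a < b) (f : ℝ → ℝ) (hf : StrictAnti f)
    (hint : IntervalIntegrable f volume 0 (b - a)) :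
    StrictMonoOn (fun x : ℝ => ∫ y in a..b, f |x - y|) (Set.Icc a ((a + b) / 2)) ∧
    StrictAntiOn (fun x : ℝ => ∫ y in a..b, f |x - y|) (Set.Icc ((a + b) / 2) b) :=
  transfer_potential_strict_mono_anti_general a b hab f hf
end

section
/- Let a < b be real numbers and let f : ℝ → ℝ be strictly decreasing and interval-integrable on [0, b−a]. Define the transfer potential K̄(x) = ∫_a^b f(|x−y|) dy for x ∈ [a,b]. Then the midpoint (a+b)/2 is the unique maximizer of K̄ on [a,b] (every x ∈ [a,b] with x ≠ (a+b)/2 satisfies K̄(x) < K̄((a+b)/2)), and the minimum of K̄ on [a,b] is attained exactly at the two endpoints a and b. -/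
/-!
Writing `F t = ∫₀ᵗ f`, splitting the integral at `y = x` gives `K̄ x = F (x - a) + F (b - x)`,
i.e. `K̄ x = G |x - (a + b) / 2|` with `G d = F (L + d) + F (L - d)` and `L = (b - a) / 2`.
For `0 ≤ d' < d`, the increment `G d - G d'` is `∫ f` over `[L + d', L + d]` minus `∫ f` over
`[L - d, L - d']`; the first interval is the second shifted right by `d + d' > 0`, so `G` is
strictly decreasing on `[0, ∞)` when `f` is. The midpoint (distance `0`) is therefore the unique
maximizer, and the endpoints (distance `L`) are the minimizers.
-/

open MeasureTheory Set

namespace TransferPotential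

variable {f : ℝ → ℝ}

theorem integral_comp_add_lt_integral (hf : StrictAnti f) {s t c : ℝ} (hst : s < t) (hc : 0 < c) :
    ∫ x in (s + c)..(t + c), f x < ∫ x in s..t, f x := by
  have hi : ∀ u v, IntervalIntegrable f volume u v := fun _ _ => hf.antitone.intervalIntegrable
  have hshift : IntervalIntegrable (fun x => f (x + c)) volume s t := by
    simpa using (hi (s + c) (t + c)).comp_add_right c
  have hpos : 0 < ∫ x in s..t, (f x - f (x + c)) :=
    intervalIntegral.intervalIntegral_pos_of_pos_on ((hi s t).sub hshift)
      (fun x _ => sub_pos.2 (hf (lt_add_of_pos_right x hc))) hst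
  rw [intervalIntegral.integral_sub (hi s t) hshift,
    intervalIntegral.integral_comp_add_right] at hpos
  linarith

theorem strictAntiOn_integral_add_integral_sub (hf : StrictAnti f) (L : ℝ) :
    StrictAntiOn (fun d => (∫ t in 0..(L + d), f t) + ∫ t in 0..(L - d), f t) (Ici 0) := by
  intro d' hd' d _ hlt
  have hi : ∀ u v, IntervalIntegrable f volume u v := fun _ _ => hf.antitone.intervalIntegrable
  have hshift : ∫ t in (L + d')..(L + d), f t < ∫ t in (L - d)..(L - d'), f t := by
    have := integral_comp_add_lt_integral hf (s := L - d) (t := L - d') (by linarith)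
      (c := d + d') (by linarith [mem_Ici.1 hd'])
    convert this using 2 <;> ring
  rw [← intervalIntegral.integral_interval_sub_left (hi 0 (L + d)) (hi 0 (L + d')),
    ← intervalIntegral.integral_interval_sub_left (hi 0 (L - d')) (hi 0 (L - d))] at hshift
  dsimp only
  linarith

theorem integral_comp_abs_sub (hf : ∀ u v, IntervalIntegrable f volume u v) {a b x : ℝ}
    (hx : x ∈ Icc a b) :
    ∫ y in a..b, f |x - y| = (∫ t in 0..(x - a), f t) + ∫ t in 0..(b - x), f t := by
  have hleft : EqOn (fun y => f |x - y|) (fun y => f (x - y)) (uIcc a x) := by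
    intro y hy
    rw [uIcc_of_le hx.1] at hy
    simp only [abs_of_nonneg (sub_nonneg.2 hy.2)]
  have hright : EqOn (fun y => f |x - y|) (fun y => f (y - x)) (uIcc x b) := by
    intro y hy
    rw [uIcc_of_le hx.2] at hy
    simp only [abs_sub_comm x y, abs_of_nonneg (sub_nonneg.2 hy.1)]
  have hiL : IntervalIntegrable (fun y => f |x - y|) volume a x := by
    refine IntervalIntegrable.congr (fun y hy => (hleft (uIoc_subset_uIcc hy)).symm) ?_
    simpa using ((hf (x - a) 0).comp_sub_left x)
  have hiR : IntervalIntegrable (fun y => f |x - y|) volume x b := by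
    refine IntervalIntegrable.congr (fun y hy => (hright (uIoc_subset_uIcc hy)).symm) ?_
    simpa using ((hf 0 (b - x)).comp_sub_right x)
  rw [← intervalIntegral.integral_add_adjacent_intervals hiL hiR,
    intervalIntegral.integral_congr hleft, intervalIntegral.integral_congr hright,
    intervalIntegral.integral_comp_sub_left, intervalIntegral.integral_comp_sub_right,
    sub_self]

theorem integral_comp_abs_sub_midpoint (hf : ∀ u v, IntervalIntegrable f volume u v)
    {a b x : ℝ} (hx : x ∈ Icc a b) :
    ∫ y in a..b, f |x - y| = (∫ t in 0..((b - a) / 2 + |x - (a + b) / 2|), f t) +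
      ∫ t in 0..((b - a) / 2 - |x - (a + b) / 2|), f t := by
  rw [integral_comp_abs_sub hf hx]
  rcases abs_choice (x - (a + b) / 2) with h | h <;> rw [h]
  · ring_nf
  · rw [add_comm]; ring_nf

end TransferPotential

open TransferPotential in
theorem transfer_potential_unique_max_min_general
    (a b : ℝ) (hab : a < b) (f : ℝ → ℝ) (hf : StrictAnti f) :
    (∀ x ∈ Set.Icc a b, x ≠ (a + b) / 2 →
      (∫ y in a..b, f |x - y|) < ∫ y in a..b, f |(a + b) / 2 - y|) ∧
    (∫ y in a..b, f |a - y|) = (∫ y in a..b, f |b - y|) ∧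
    (∀ x ∈ Set.Icc a b, (∫ y in a..b, f |a - y|) ≤ ∫ y in a..b, f |x - y|) ∧
    (∀ x ∈ Set.Ioo a b, (∫ y in a..b, f |a - y|) < ∫ y in a..b, f |x - y|) := by
  have hG := strictAntiOn_integral_add_integral_sub hf ((b - a) / 2)
  have hK := fun x (hx : x ∈ Icc a b) =>
    integral_comp_abs_sub_midpoint (fun _ _ => hf.antitone.intervalIntegrable) hx
  set m := (a + b) / 2 with hm
  set L := (b - a) / 2 with hL
  have hdist : ∀ x ∈ Icc a b, |x - m| ≤ L := fun x hx =>
    abs_le.2 ⟨by linarith [hx.1], by linarith [hx.2]⟩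
  have hdist_a : |a - m| = L := by rw [abs_of_nonpos (by linarith)]; ring
  have hdist_b : |b - m| = L := by rw [abs_of_nonneg (by linarith)]; ring
  have ha : a ∈ Icc a b := left_mem_Icc.2 hab.le
  have hb : b ∈ Icc a b := right_mem_Icc.2 hab.le
  have hL0 : L ∈ Ici 0 := mem_Ici.2 (by linarith)
  have hdist_nonneg : ∀ x, |x - m| ∈ Ici 0 := fun x => mem_Ici.2 (abs_nonneg _)
  refine ⟨fun x hx hxm => ?_, ?_, fun x hx => ?_, fun x hx => ?_⟩
  · rw [hK x hx, hK m ⟨by linarith, by linarith⟩, sub_self, abs_zero]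
    exact hG (mem_Ici.2 le_rfl) (hdist_nonneg x) (abs_pos.2 (sub_ne_zero.2 hxm))
  · rw [hK a ha, hK b hb, hdist_a, hdist_b]
  · rw [hK a ha, hK x hx, hdist_a]
    exact hG.antitoneOn (hdist_nonneg x) hL0 (hdist x hx)
  · rw [hK a ha, hK x (Ioo_subset_Icc_self hx), hdist_a]
    exact hG (hdist_nonneg x) hL0 (abs_lt.2 ⟨by linarith [hx.1], by linarith [hx.2]⟩)

/-- **Magnification prototypes, strict version.**
For `a < b` and `f` strictly decreasing and interval-integrable on `[0, b - a]`, the transfer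
potential `K̄ x = ∫ y in a..b, f |x - y|` is uniquely maximized at the midpoint `(a + b) / 2`
(every `x ∈ [a, b]` with `x ≠ (a + b) / 2` satisfies `K̄ x < K̄ ((a + b) / 2)`), and its minimum
on `[a, b]` is attained exactly at the two endpoints: `K̄ a = K̄ b`, `K̄ a ≤ K̄ x` for all
`x ∈ [a, b]`, and `K̄ a < K̄ x` for every interior point `x ∈ (a, b)`. -/
theorem transfer_potential_unique_max_min
    (a b : ℝ) (hab : a < b) (f : ℝ → ℝ) (hf : StrictAnti f)
    (hint : IntervalIntegrable f volume 0 (b - a)) :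
    (∀ x ∈ Set.Icc a b, x ≠ (a + b) / 2 →
      (∫ y in a..b, f |x - y|) < ∫ y in a..b, f |(a + b) / 2 - y|) ∧
    (∫ y in a..b, f |a - y|) = (∫ y in a..b, f |b - y|) ∧
    (∀ x ∈ Set.Icc a b, (∫ y in a..b, f |a - y|) ≤ ∫ y in a..b, f |x - y|) ∧
    (∀ x ∈ Set.Ioo a b, (∫ y in a..b, f |a - y|) < ∫ y in a..b, f |x - y|) :=
  transfer_potential_unique_max_min_general a b hab f hf
end

section
/- Let 0 < a < b be real numbers and define G(x) = (x³ − a³)/(3x²) + x − x²/b for x ∈ [a,b] (the transfer potential of the information-based kernel K_info(x,y) = (min(x,y)/max(x,y))² on [a,b]). Then the maximum of G on [a,b] is attained at an interior point: there exists c ∈ (a,b) such that G(x) ≤ G(c) for all x ∈ [a,b], and moreover G(a) < G(c) and G(b) < G(c). -/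
/-- **Interior maximum of the transfer potential of the information-based kernel.**
For `0 < a < b`, let `G x = (x ^ 3 - a ^ 3) / (3 * x ^ 2) + x - x ^ 2 / b` (the transfer
potential of the information-based kernel `K_info x y = (min x y / max x y) ^ 2` on `[a, b]`).
Then the maximum of `G` on `[a, b]` is attained at an interior point: there exists
`c ∈ (a, b)` with `G x ≤ G c` for all `x ∈ [a, b]`, and moreover `G a < G c` and `G b < G c`. -/
theorem info_kernel_transfer_potential_interior_max
    (a b : ℝ) (ha : 0 < a) (hab : a < b) :
    letI G : ℝ → ℝ := fun x => (x ^ 3 - a ^ 3) / (3 * x ^ 2) + x - x ^ 2 / b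
    ∃ c ∈ Set.Ioo a b,
      (∀ x ∈ Set.Icc a b, G x ≤ G c) ∧ G a < G c ∧ G b < G c := by
  set G : ℝ → ℝ := fun x => (x ^ 3 - a ^ 3) / (3 * x ^ 2) + x - x ^ 2 / b with hG
  have hb : (0:ℝ) < b := ha.trans hab
  set m : ℝ := (a + b) / 2 with hm
  have hma : a < m := by simp only [hm]; linarith
  have hmb : m < b := by simp only [hm]; linarith
  have hm0 : (0:ℝ) < m := ha.trans hma
  -- G at the midpoint beats both endpoints
  have hGa : G a < G m := by
    have key : G m - G a = ((m - a) * (b * (m^2 + a*m + a^2) + 3*b*m^2 - 3*m^2*(m+a)))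
        / (3 * m^2 * b) := by
      simp only [G]
      field_simp
      ring
    have hnum : 0 < (m - a) * (b * (m^2 + a*m + a^2) + 3*b*m^2 - 3*m^2*(m+a)) := by
      apply mul_pos (by linarith)
      rw [hm]
      nlinarith [mul_pos (mul_pos ha hb) (sub_pos.mpr hab),
        mul_pos (mul_pos ha ha) (sub_pos.mpr hab),
        mul_pos (mul_pos hb hb) (sub_pos.mpr hab), mul_pos ha hb]
    have hden : (0:ℝ) < 3 * m^2 * b := by positivity
    have := div_pos hnum hden
    linarith [key ▸ this]
  have hGb : G b < G m := by
    have key : G m - G b = (b^2 * (m^3 - a^3) - m^2 * (b^3 - a^3) + 3*m^3*b*(b-m))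
        / (3 * m^2 * b^2) := by
      simp only [G]
      field_simp
      ring
    have hnum : 0 < b^2 * (m^3 - a^3) - m^2 * (b^3 - a^3) + 3*m^3*b*(b-m) := by
      rw [hm]
      have h1 : (0:ℝ) < (b - a)^2 := pow_pos (sub_pos.mpr hab) 2
      have h2 : (0:ℝ) < 4*a^3 + 13*a^2*b + 6*a*b^2 + b^3 := by positivity
      nlinarith [mul_pos h1 h2]
    have hden : (0:ℝ) < 3 * m^2 * b^2 := by positivity
    have := div_pos hnum hden
    linarith [key ▸ this]
  -- continuity of G on [a, b]
  have hcont : ContinuousOn G (Set.Icc a b) := by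
    apply ContinuousOn.sub
    · apply ContinuousOn.add
      · apply ContinuousOn.div
        · fun_prop
        · fun_prop
        · intro x hx
          have : 0 < x := lt_of_lt_of_le ha hx.1
          positivity
      · fun_prop
    · apply ContinuousOn.div
      · fun_prop
      · fun_prop
      · intro x _; exact ne_of_gt hb
  obtain ⟨c, hc, hmax⟩ := (isCompact_Icc (a := a) (b := b)).exists_isMaxOn
    (Set.nonempty_Icc.mpr hab.le) hcont
  have hmem : m ∈ Set.Icc a b := ⟨hma.le, hmb.le⟩
  have hGm : G m ≤ G c := hmax hmem
  have hGac : G a < G c := lt_of_lt_of_le hGa hGm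
  have hGbc : G b < G c := lt_of_lt_of_le hGb hGm
  refine ⟨c, ⟨?_, ?_⟩, fun x hx => hmax hx, hGac, hGbc⟩
  · rcases lt_or_eq_of_le hc.1 with h | h
    · exact h
    · exact absurd (h ▸ hGac) (lt_irrefl _)
  · rcases lt_or_eq_of_le hc.2 with h | h
    · exact h
    · exact absurd (h ▸ hGbc) (lt_irrefl _)
end

section
/- Let n ≥ 1, let g : Fin n → ℝ, and let λ > 0. Any probability vector p on Fin n that attains the maximum of the entropy-regularized objective ∑_i p_i g_i − λ ∑_i p_i log p_i (with the convention 0·log 0 = 0) is equal to the Gibbs/softmax distribution p*_i = exp(g_i/λ) / ∑_j exp(g_j/λ); i.e., the maximizer is unique. -/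
/-!
Write `q = softmax (g / λ)` and `Z = ∑ j, exp (g j / λ)`. Since `log q i = g i / λ - log Z`, the
objective of any probability vector `p` equals `λ (log Z - ∑ i, q i * klFun (p i / q i))`, i.e.
`λ log Z` minus `λ` times the Kullback–Leibler divergence of `p` from `q`. Each summand is
nonnegative and vanishes only when `p i = q i`, so `q` attains the value `λ log Z`, and any `p`
doing at least as well must coincide with `q`.
-/

open Finset Real InformationTheory

noncomputable def softmax {ι : Type*} [Fintype ι] (f : ι → ℝ) (i : ι) : ℝ :=
  exp (f i) / ∑ j, exp (f j)

section

variable {ι : Type*} [Fintype ι]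

lemma nonempty_of_sum_eq_one {p : ι → ℝ} (hp : ∑ i, p i = 1) : Nonempty ι :=
  univ_nonempty_iff.mp (nonempty_of_sum_ne_zero (hp ▸ one_ne_zero))

variable [Nonempty ι]

lemma sum_exp_pos (f : ι → ℝ) : 0 < ∑ j, exp (f j) :=
  sum_pos (fun _ _ => exp_pos _) univ_nonempty

lemma softmax_pos (f : ι → ℝ) (i : ι) : 0 < softmax f i :=
  div_pos (exp_pos _) (sum_exp_pos f)

lemma sum_softmax (f : ι → ℝ) : ∑ i, softmax f i = 1 := by
  simp only [softmax, ← sum_div, div_self (sum_exp_pos f).ne']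

lemma log_softmax (f : ι → ℝ) (i : ι) :
    log (softmax f i) = f i - log (∑ j, exp (f j)) := by
  rw [softmax, log_div (exp_pos _).ne' (sum_exp_pos f).ne', log_exp]

lemma mul_log_div_softmax (f : ι → ℝ) (x : ℝ) (i : ι) :
    x * log (x / softmax f i) = x * log x - x * f i + x * log (∑ j, exp (f j)) := by
  rcases eq_or_ne x 0 with rfl | hx
  · simp
  · rw [log_div hx (softmax_pos f i).ne', log_softmax]
    ring

lemma sum_mul_sub_sum_mul_log_eq (f : ι → ℝ) {p : ι → ℝ} (hp : ∑ i, p i = 1) :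
    ∑ i, p i * f i - ∑ i, p i * log (p i) =
      log (∑ j, exp (f j)) - ∑ i, softmax f i * klFun (p i / softmax f i) := by
  have hterm : ∀ i, softmax f i * klFun (p i / softmax f i) =
      p i * log (p i) - p i * f i + p i * log (∑ j, exp (f j)) + softmax f i - p i := by
    intro i
    rw [klFun_apply, ← mul_log_div_softmax]
    field_simp [(softmax_pos f i).ne']
  simp only [hterm, sum_sub_distrib, sum_add_distrib, ← sum_mul, hp, sum_softmax]
  ring

lemma sum_mul_sub_sum_mul_log_softmax (f : ι → ℝ) :
    ∑ i, softmax f i * f i - ∑ i, softmax f i * log (softmax f i) = log (∑ j, exp (f j)) := by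
  simp [sum_mul_sub_sum_mul_log_eq f (sum_softmax f), (softmax_pos f _).ne', klFun_one]

lemma eq_softmax_of_log_sum_exp_le (f : ι → ℝ) {p : ι → ℝ} (hp0 : ∀ i, 0 ≤ p i)
    (hp1 : ∑ i, p i = 1)
    (hle : log (∑ j, exp (f j)) ≤ ∑ i, p i * f i - ∑ i, p i * log (p i)) :
    p = softmax f := by
  have hkl_nonneg : ∀ i, 0 ≤ softmax f i * klFun (p i / softmax f i) := fun i =>
    mul_nonneg (softmax_pos f i).le (klFun_nonneg (div_nonneg (hp0 i) (softmax_pos f i).le))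
  have hkl_zero : ∑ i, softmax f i * klFun (p i / softmax f i) = 0 := by
    rw [sum_mul_sub_sum_mul_log_eq f hp1] at hle
    exact le_antisymm (by linarith) (sum_nonneg fun i _ => hkl_nonneg i)
  funext i
  have hi := (sum_eq_zero_iff_of_nonneg fun i _ => hkl_nonneg i).mp hkl_zero i (mem_univ i)
  rw [mul_eq_zero, klFun_eq_zero_iff (div_nonneg (hp0 i) (softmax_pos f i).le),
    div_eq_one_iff_eq (softmax_pos f i).ne'] at hi
  exact hi.resolve_left (softmax_pos f i).ne'

end

theorem entropy_regularized_maximizer_unique_general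
    (n : ℕ) (g : Fin n → ℝ) (lam : ℝ) (hlam : 0 < lam)
    (p : Fin n → ℝ) (hp0 : ∀ i, 0 ≤ p i) (hp1 : (∑ i, p i) = 1)
    (hmax : ∀ q : Fin n → ℝ, (∀ i, 0 ≤ q i) → (∑ i, q i) = 1 →
      ∑ i, q i * g i - lam * ∑ i, q i * Real.log (q i) ≤
        ∑ i, p i * g i - lam * ∑ i, p i * Real.log (p i)) :
    p = fun i => Real.exp (g i / lam) / ∑ j, Real.exp (g j / lam) := by
  have := nonempty_of_sum_eq_one hp1
  have hscale : ∀ q : Fin n → ℝ, ∑ i, q i * g i - lam * ∑ i, q i * log (q i) =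
      lam * (∑ i, q i * (g i / lam) - ∑ i, q i * log (q i)) := fun q => by
    rw [mul_sub, mul_sum, mul_sum]
    congr 1
    exact sum_congr rfl fun i _ => by field_simp
  have hq := hmax (softmax fun i => g i / lam) (fun i => (softmax_pos _ i).le) (sum_softmax _)
  rw [hscale, hscale, sum_mul_sub_sum_mul_log_softmax] at hq
  exact eq_softmax_of_log_sum_exp_le _ hp0 hp1 (le_of_mul_le_mul_left hq hlam)

/-- **Uniqueness of the entropy-regularized maximizer.**
For `n ≥ 1`, `g : Fin n → ℝ` and `λ > 0`, any probability vector `p` on `Fin n` attaining the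
maximum of the entropy-regularized objective `∑ i, p i * g i - λ * ∑ i, p i * log (p i)`
(with the convention `0 * log 0 = 0`, which holds since `Real.log 0 = 0`) equals the
Gibbs/softmax distribution `p* i = exp (g i / λ) / ∑ j, exp (g j / λ)`. -/
theorem entropy_regularized_maximizer_unique
    (n : ℕ) (hn : 1 ≤ n) (g : Fin n → ℝ) (lam : ℝ) (hlam : 0 < lam)
    (p : Fin n → ℝ) (hp0 : ∀ i, 0 ≤ p i) (hp1 : (∑ i, p i) = 1)
    (hmax : ∀ q : Fin n → ℝ, (∀ i, 0 ≤ q i) → (∑ i, q i) = 1 →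
      ∑ i, q i * g i - lam * ∑ i, q i * Real.log (q i) ≤
        ∑ i, p i * g i - lam * ∑ i, p i * Real.log (p i)) :
    p = fun i => Real.exp (g i / lam) / ∑ j, Real.exp (g j / lam) :=
  entropy_regularized_maximizer_unique_general n g lam hlam p hp0 hp1 hmax
end

section
/- Let K(x,y) = (min(x,y)/max(x,y))² be the information-based kernel and define the accumulated training signal of discrete uniform sampling over the standard magnifications {1/4, 1/2, 1, 2} as S(y) = (1/4)·(K(1/4, y) + K(1/2, y) + K(1, y) + K(2, y)). Then the intermediate magnification 3/2 receives strictly less signal than every standard magnification: S(3/2) < S(m) for each m ∈ {1/4, 1/2, 1, 2}. Explicitly, S(3/2) = 55/192 while S(1/4) = S(2) = 85/256 and S(1/2) = S(1) = 25/64. -/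
/-- The information-based kernel `K_info x y = (min x y / max x y) ^ 2`. -/
noncomputable def Kinfo (x y : ℝ) : ℝ := (min x y / max x y) ^ 2

/-- The accumulated training signal of discrete uniform sampling over the standard
magnifications `{1/4, 1/2, 1, 2}` under the information-based kernel. -/
noncomputable def Sdu (y : ℝ) : ℝ :=
  (1 / 4) * (Kinfo (1 / 4) y + Kinfo (1 / 2) y + Kinfo 1 y + Kinfo 2 y)

/-- **Discrete uniform sampling creates a gap at the intermediate magnification 1.5 mpp.**
Under the information-based kernel, the intermediate magnification `3/2` receives strictly
less accumulated training signal than every standard magnification: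
`S (3/2) < S m` for each `m ∈ {1/4, 1/2, 1, 2}`. Explicitly, `S (3/2) = 55/192` while
`S (1/4) = S 2 = 85/256` and `S (1/2) = S 1 = 25/64`. -/
theorem discrete_uniform_intermediate_gap :
    (Sdu (3 / 2) < Sdu (1 / 4) ∧ Sdu (3 / 2) < Sdu (1 / 2) ∧
      Sdu (3 / 2) < Sdu 1 ∧ Sdu (3 / 2) < Sdu 2) ∧
    Sdu (3 / 2) = 55 / 192 ∧
    Sdu (1 / 4) = 85 / 256 ∧ Sdu 2 = 85 / 256 ∧
    Sdu (1 / 2) = 25 / 64 ∧ Sdu 1 = 25 / 64 := by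
  have h : ∀ y : ℝ, Sdu y = (1 / 4) * ((min (1/4) y / max (1/4) y) ^ 2 + (min (1/2) y / max (1/2) y) ^ 2 + (min 1 y / max 1 y) ^ 2 + (min 2 y / max 2 y) ^ 2) := fun y => rfl
  norm_num [h, min_def, max_def]
end
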